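/- arXiv:2305.15761 — 4 statements merged into one kernel-verified Lean document; each statement's English description precedes it below -/
import Mathlib

section
/- Let τ* : [0,1] → [0,1] be continuously differentiable with τ*(0) = 0, τ*(1) = 1, and suppose F(τ*(t)) = t for every t ∈ [0,1] (i.e., τ* = F⁻¹). Then for every admissible reparameterization τ : [0,1] → [0,1] one has J(τ*) ≤ J(τ); that is, τ* = F⁻¹ is a global minimizer of the functional J over all admissible reparameterizations. (Theorem 1 of the paper.) -/
/-!
Put `c = ∫₀¹ √𝔤`. Since `F ∘ τ* = id`, differentiating `∫₀^{τ*(t)} √𝔤 = c t` shows that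
`τ*` has constant `√𝔤`-speed: `√(𝔤 (τ* t)) τ*'(t) = c`, hence `J(τ*) = c²`. For any admissible
`τ`, the substitution `σ = τ(t)` gives `∫₀¹ √(𝔤 (τ t)) τ'(t) dt = c`, and Cauchy–Schwarz on `[0,1]`
yields `c² ≤ ∫₀¹ 𝔤(τ t) τ'(t)² dt = J(τ)`.
-/

open Set intervalIntegral MeasureTheory

theorem ContinuousOn.hasDerivWithinAt_integral_Icc {E : Type*} [NormedAddCommGroup E]
    [NormedSpace ℝ E] [CompleteSpace E] {f : ℝ → E} {a b x : ℝ}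
    (hf : ContinuousOn f (Icc a b)) (hx : x ∈ Icc a b) :
    HasDerivWithinAt (fun u => ∫ t in a..u, f t) (f x) (Icc a b) x := by
  have := Fact.mk hx
  exact integral_hasDerivWithinAt_right
    ((hf.mono (Icc_subset_Icc le_rfl hx.2)).intervalIntegrable_of_Icc hx.1)
    (hf.stronglyMeasurableAtFilter_nhdsWithin measurableSet_Icc x) (hf x hx)

theorem mul_deriv_eq_of_integral_comp_eq_mul {f τ : ℝ → ℝ} {a b p q C t v : ℝ} (hpq : p < q)
    (hf : ContinuousOn f (Icc a b)) (hτ : MapsTo τ (Icc p q) (Icc a b))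
    (hC : ∀ u ∈ Icc p q, ∫ x in a..τ u, f x = C * u) (ht : t ∈ Icc p q)
    (hτt : HasDerivWithinAt τ v (Icc p q) t) :
    f (τ t) * v = C := by
  have hcomp : HasDerivWithinAt (fun u => ∫ x in a..τ u, f x) (f (τ t) * v) (Icc p q) t :=
    (hf.hasDerivWithinAt_integral_Icc (hτ ht)).comp t hτt hτ
  have hlin : HasDerivWithinAt (fun u => ∫ x in a..τ u, f x) C (Icc p q) t := by
    simpa using ((hasDerivWithinAt_id t (Icc p q)).const_mul C).congr hC (hC t ht)
  exact (uniqueDiffOn_Icc hpq t ht).eq_deriv _ hcomp hlin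

theorem integral_comp_mul_deriv_of_hasDerivWithinAt_Icc {f f' g : ℝ → ℝ} {a b : ℝ} (hab : a ≤ b)
    (hf : ∀ x ∈ Icc a b, HasDerivWithinAt f (f' x) (Icc a b) x)
    (hf' : ContinuousOn f' (Icc a b)) (hg : ContinuousOn g (f '' Icc a b)) :
    ∫ x in a..b, g (f x) * f' x = ∫ x in f a..f b, g x := by
  have hf_cont : ContinuousOn f (Icc a b) := fun x hx => (hf x hx).continuousWithinAt
  rw [← uIcc_of_le hab] at hf_cont hf' hg
  refine integral_comp_mul_deriv'' hf_cont (fun x hx => ?_) hf' hg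
  rw [min_eq_left hab, max_eq_right hab] at hx
  exact (hf x (Ioo_subset_Icc_self hx)).mono_of_mem_nhdsWithin
    (Icc_mem_nhdsGT_of_mem ⟨hx.1.le, hx.2⟩)

theorem sq_intervalIntegral_le_mul_intervalIntegral_sq {f : ℝ → ℝ} {a b : ℝ} (hab : a ≤ b)
    (hf : IntervalIntegrable f volume a b)
    (hf2 : IntervalIntegrable (fun x => f x ^ 2) volume a b) :
    (∫ x in a..b, f x) ^ 2 ≤ (b - a) * ∫ x in a..b, f x ^ 2 := by
  have hquad : ∀ c : ℝ,
      0 ≤ (b - a) * (c * c) + (-2 * ∫ x in a..b, f x) * c + ∫ x in a..b, f x ^ 2 := by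
    intro c
    have hnonneg : 0 ≤ ∫ x in a..b, (f x - c) ^ 2 := integral_nonneg hab fun x _ => sq_nonneg _
    have hexpand : ∫ x in a..b, (f x - c) ^ 2
        = (∫ x in a..b, f x ^ 2) - 2 * c * (∫ x in a..b, f x) + (b - a) * c ^ 2 := by
      have hsq : ∀ x, (f x - c) ^ 2 = f x ^ 2 - 2 * c * f x + c ^ 2 := fun x => by ring
      simp_rw [hsq]
      rw [integral_add (hf2.sub (hf.const_mul _)) intervalIntegrable_const,
        integral_sub hf2 (hf.const_mul _), intervalIntegral.integral_const_mul]
      simp only [intervalIntegral.integral_const, smul_eq_mul]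
    linarith
  have hdiscrim := discrim_le_zero hquad
  rw [discrim] at hdiscrim
  linarith

theorem gora_global_minimizer_general
    (𝔤 : ℝ → ℝ)
    (h𝔤_cont : ContinuousOn 𝔤 (Set.Icc 0 1))
    (h𝔤_pos : ∀ σ ∈ Set.Icc (0:ℝ) 1, 0 < 𝔤 σ)
    (F : ℝ → ℝ)
    (hF : ∀ s, F s =
      (∫ σ in (0:ℝ)..s, Real.sqrt (𝔤 σ)) / (∫ σ in (0:ℝ)..1, Real.sqrt (𝔤 σ)))
    (τstar τstar' : ℝ → ℝ)
    (hτstar_maps : Set.MapsTo τstar (Set.Icc 0 1) (Set.Icc 0 1))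
    (hτstar_deriv : ∀ t ∈ Set.Icc (0:ℝ) 1, HasDerivWithinAt τstar (τstar' t) (Set.Icc 0 1) t)
    (hτstar_inv : ∀ t ∈ Set.Icc (0:ℝ) 1, F (τstar t) = t) :
    ∀ τ τ' : ℝ → ℝ,
      Set.MapsTo τ (Set.Icc 0 1) (Set.Icc 0 1) →
      (∀ t ∈ Set.Icc (0:ℝ) 1, HasDerivWithinAt τ (τ' t) (Set.Icc 0 1) t) →
      ContinuousOn τ' (Set.Icc 0 1) →
      (∀ t ∈ Set.Icc (0:ℝ) 1, 0 ≤ τ' t) →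
      τ 0 = 0 → τ 1 = 1 →
      (∫ t in (0:ℝ)..1, 𝔤 (τstar t) * (τstar' t) ^ 2)
        ≤ ∫ t in (0:ℝ)..1, 𝔤 (τ t) * (τ' t) ^ 2 := by
  intro τ τ' hτ_maps hτ_deriv hτ'_cont _ hτ0 hτ1
  set c := ∫ σ in (0:ℝ)..1, √(𝔤 σ)
  have hsqrt : ContinuousOn (fun σ => √(𝔤 σ)) (Icc 0 1) := h𝔤_cont.sqrt
  have hsq : ∀ σ ∈ Icc (0:ℝ) 1, √(𝔤 σ) ^ 2 = 𝔤 σ := fun σ hσ => Real.sq_sqrt (h𝔤_pos σ hσ).le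
  have hc : 0 < c := intervalIntegral_pos_of_pos_on (hsqrt.intervalIntegrable_of_Icc zero_le_one)
    (fun σ hσ => Real.sqrt_pos.mpr (h𝔤_pos σ (Ioo_subset_Icc_self hσ))) one_pos
  have hstar : ∀ t ∈ Icc (0:ℝ) 1, √(𝔤 (τstar t)) * τstar' t = c := fun t ht =>
    mul_deriv_eq_of_integral_comp_eq_mul (f := fun σ => √(𝔤 σ)) one_pos hsqrt hτstar_maps
      (fun u hu => by rw [mul_comm, ← div_eq_iff hc.ne', ← hF, hτstar_inv u hu]) ht
      (hτstar_deriv t ht)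
  have hτ_speed : ∫ t in (0:ℝ)..1, √(𝔤 (τ t)) * τ' t = c := by
    rw [integral_comp_mul_deriv_of_hasDerivWithinAt_Icc zero_le_one hτ_deriv hτ'_cont
      (hsqrt.mono hτ_maps.image_subset), hτ0, hτ1]
  have hτ_cont : ContinuousOn (fun t => √(𝔤 (τ t)) * τ' t) (Icc 0 1) :=
    (hsqrt.comp (fun t ht => (hτ_deriv t ht).continuousWithinAt) hτ_maps).mul hτ'_cont
  calc ∫ t in (0:ℝ)..1, 𝔤 (τstar t) * τstar' t ^ 2
      = ∫ _ in (0:ℝ)..1, c ^ 2 := integral_congr fun t ht => by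
        rw [uIcc_of_le zero_le_one] at ht
        rw [← hstar t ht, mul_pow, hsq _ (hτstar_maps ht)]
    _ = (∫ t in (0:ℝ)..1, √(𝔤 (τ t)) * τ' t) ^ 2 := by simp [hτ_speed]
    _ ≤ (1 - 0) * ∫ t in (0:ℝ)..1, (√(𝔤 (τ t)) * τ' t) ^ 2 :=
      sq_intervalIntegral_le_mul_intervalIntegral_sq zero_le_one
        (hτ_cont.intervalIntegrable_of_Icc zero_le_one)
        ((hτ_cont.pow 2).intervalIntegrable_of_Icc zero_le_one)
    _ = ∫ t in (0:ℝ)..1, 𝔤 (τ t) * τ' t ^ 2 := by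
      rw [sub_zero, one_mul]
      refine integral_congr fun t ht => ?_
      rw [uIcc_of_le zero_le_one] at ht
      simp only [mul_pow, hsq _ (hτ_maps ht)]

/-- **Theorem 1 (GORA, global optimality).**
If `τ*` is continuously differentiable on `[0,1]` with `τ*(0) = 0`, `τ*(1) = 1`, and
`F (τ*(t)) = t` for all `t ∈ [0,1]` (i.e. `τ* = F⁻¹`), then for every admissible
reparameterization `τ`, `J(τ*) ≤ J(τ)`. -/
theorem gora_global_minimizer
    (𝔤 : ℝ → ℝ)
    (h𝔤_cont : ContinuousOn 𝔤 (Set.Icc 0 1))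
    (h𝔤_pos : ∀ σ ∈ Set.Icc (0:ℝ) 1, 0 < 𝔤 σ)
    (F : ℝ → ℝ)
    (hF : ∀ s, F s =
      (∫ σ in (0:ℝ)..s, Real.sqrt (𝔤 σ)) / (∫ σ in (0:ℝ)..1, Real.sqrt (𝔤 σ)))
    (τstar τstar' : ℝ → ℝ)
    (hτstar_maps : Set.MapsTo τstar (Set.Icc 0 1) (Set.Icc 0 1))
    (hτstar_deriv : ∀ t ∈ Set.Icc (0:ℝ) 1, HasDerivWithinAt τstar (τstar' t) (Set.Icc 0 1) t)
    (hτstar'_cont : ContinuousOn τstar' (Set.Icc 0 1))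
    (hτstar0 : τstar 0 = 0) (hτstar1 : τstar 1 = 1)
    (hτstar_inv : ∀ t ∈ Set.Icc (0:ℝ) 1, F (τstar t) = t) :
    ∀ τ τ' : ℝ → ℝ,
      Set.MapsTo τ (Set.Icc 0 1) (Set.Icc 0 1) →
      (∀ t ∈ Set.Icc (0:ℝ) 1, HasDerivWithinAt τ (τ' t) (Set.Icc 0 1) t) →
      ContinuousOn τ' (Set.Icc 0 1) →
      (∀ t ∈ Set.Icc (0:ℝ) 1, 0 ≤ τ' t) →
      τ 0 = 0 → τ 1 = 1 →
      (∫ t in (0:ℝ)..1, 𝔤 (τstar t) * (τstar' t) ^ 2)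
        ≤ ∫ t in (0:ℝ)..1, 𝔤 (τ t) * (τ' t) ^ 2 :=
  gora_global_minimizer_general 𝔤 h𝔤_cont h𝔤_pos F hF τstar τstar' hτstar_maps hτstar_deriv
    hτstar_inv
end

section
/- Let τ* : [0,1] → [0,1] be continuously differentiable with F(τ*(t)) = t for every t ∈ [0,1]. Then 𝔤(τ*(t)) τ*'(t)² = (∫₀¹ 𝔤(σ)^{1/2} dσ)² for every t ∈ [0,1], and consequently J(τ*) = (∫₀¹ 𝔤(σ)^{1/2} dσ)², so τ* attains the lower bound of the cost functional. -/
/-- **The optimal reparameterization attains the lower bound.** If `τ*` is continuously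
differentiable with `F (τ*(t)) = t` for all `t ∈ [0,1]`, then
`𝔤(τ*(t)) τ*'(t)² = (∫₀¹ √(𝔤(σ)) dσ)²` for every `t ∈ [0,1]` and consequently
`J(τ*) = (∫₀¹ √(𝔤(σ)) dσ)²`. -/
theorem gora_optimal_attains_bound
    (𝔤 : ℝ → ℝ)
    (h𝔤_cont : ContinuousOn 𝔤 (Set.Icc 0 1))
    (h𝔤_pos : ∀ σ ∈ Set.Icc (0:ℝ) 1, 0 < 𝔤 σ)
    (F : ℝ → ℝ)
    (hF : ∀ s, F s =
      (∫ σ in (0:ℝ)..s, Real.sqrt (𝔤 σ)) / (∫ σ in (0:ℝ)..1, Real.sqrt (𝔤 σ)))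
    (τstar τstar' : ℝ → ℝ)
    (hτstar_maps : Set.MapsTo τstar (Set.Icc 0 1) (Set.Icc 0 1))
    (hτstar_deriv : ∀ t ∈ Set.Icc (0:ℝ) 1, HasDerivWithinAt τstar (τstar' t) (Set.Icc 0 1) t)
    (hτstar'_cont : ContinuousOn τstar' (Set.Icc 0 1))
    (hτstar_inv : ∀ t ∈ Set.Icc (0:ℝ) 1, F (τstar t) = t) :
    (∀ t ∈ Set.Icc (0:ℝ) 1,
        𝔤 (τstar t) * (τstar' t) ^ 2 = (∫ σ in (0:ℝ)..1, Real.sqrt (𝔤 σ)) ^ 2)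
    ∧ (∫ t in (0:ℝ)..1, 𝔤 (τstar t) * (τstar' t) ^ 2)
        = (∫ σ in (0:ℝ)..1, Real.sqrt (𝔤 σ)) ^ 2 := by
  -- clamp
  set h : ℝ → ℝ := fun σ => Real.sqrt (𝔤 (max 0 (min 1 σ))) with hh
  have hclamp : ∀ σ ∈ Set.Icc (0:ℝ) 1, max 0 (min 1 σ) = σ := by
    intro σ hσ
    rw [min_eq_right hσ.2, max_eq_right hσ.1]
  have hmem : ∀ σ : ℝ, max 0 (min 1 σ) ∈ Set.Icc (0:ℝ) 1 := by
    intro σ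
    constructor
    · exact le_max_left _ _
    · exact max_le zero_le_one (min_le_left _ _)
  have hh_cont : Continuous h := by
    apply Real.continuous_sqrt.comp
    have : Continuous fun σ : ℝ => max 0 (min 1 σ) :=
      continuous_const.max (continuous_const.min continuous_id)
    exact (h𝔤_cont.comp_continuous this hmem)
  have hagree : ∀ σ ∈ Set.Icc (0:ℝ) 1, h σ = Real.sqrt (𝔤 σ) := by
    intro σ hσ; simp [hh, hclamp σ hσ]
  -- integrals agree on subintervals of [0,1]
  have hint_eq : ∀ s ∈ Set.Icc (0:ℝ) 1,
      (∫ σ in (0:ℝ)..s, Real.sqrt (𝔤 σ)) = ∫ σ in (0:ℝ)..s, h σ := by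
    intro s hs
    apply intervalIntegral.integral_congr
    intro σ hσ
    have : σ ∈ Set.Icc (0:ℝ) 1 := by
      rcases hσ with ⟨h1, h2⟩
      simp only [min_def, max_def] at h1 h2
      constructor <;> [skip; skip] <;>
        · split_ifs at h1 h2 <;> first | linarith [hs.1, hs.2] | linarith
    exact (hagree σ this).symm
  set c : ℝ := ∫ σ in (0:ℝ)..1, Real.sqrt (𝔤 σ) with hc
  have hc_pos : 0 < c := by
    rw [hc, hint_eq 1 (by norm_num)]
    apply intervalIntegral.intervalIntegral_pos_of_pos_on
    · exact (hh_cont.intervalIntegrable 0 1)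
    · intro x hx
      have hx' : x ∈ Set.Icc (0:ℝ) 1 := ⟨le_of_lt hx.1, le_of_lt hx.2⟩
      rw [hagree x hx']
      exact Real.sqrt_pos.mpr (h𝔤_pos x hx')
    · norm_num
  -- G s = ∫₀^s h, derivative h s everywhere
  have hG_deriv : ∀ s : ℝ, HasDerivAt (fun u => ∫ σ in (0:ℝ)..u, h σ) (h s) s := by
    intro s
    exact intervalIntegral.integral_hasDerivAt_right (hh_cont.intervalIntegrable 0 s)
      (hh_cont.stronglyMeasurableAtFilter _ _) hh_cont.continuousAt
  have key : ∀ t ∈ Set.Icc (0:ℝ) 1, Real.sqrt (𝔤 (τstar t)) * τstar' t = c := by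
    intro t ht
    have hmem' := hτstar_maps ht
    -- G ∘ τ* has derivative within
    have hcomp : HasDerivWithinAt (fun u => ∫ σ in (0:ℝ)..(τstar u), h σ)
        (h (τstar t) * τstar' t) (Set.Icc 0 1) t :=
      (hG_deriv (τstar t)).comp_hasDerivWithinAt t (hτstar_deriv t ht)
    -- G ∘ τ* = c * t on [0,1]
    have heq : ∀ u ∈ Set.Icc (0:ℝ) 1, (∫ σ in (0:ℝ)..(τstar u), h σ) = c * u := by
      intro u hu
      have := hτstar_inv u hu
      rw [hF] at this
      have h2 : (∫ σ in (0:ℝ)..(τstar u), Real.sqrt (𝔤 σ)) = c * u := by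
        field_simp at this
        linarith [this]
      rw [← hint_eq _ (hτstar_maps hu), h2]
    have hlin : HasDerivWithinAt (fun u : ℝ => c * u) (h (τstar t) * τstar' t)
        (Set.Icc 0 1) t := hcomp.congr (fun u hu => (heq u hu).symm) (heq t ht).symm
    have hlin2 : HasDerivWithinAt (fun u : ℝ => c * u) c (Set.Icc 0 1) t :=
      by simpa using ((hasDerivAt_id t).const_mul c).hasDerivWithinAt
    have huniq := (uniqueDiffOn_Icc zero_lt_one t ht).eq_deriv _ hlin hlin2
    rw [hagree _ hmem'] at huniq
    exact huniq
  have part1 : ∀ t ∈ Set.Icc (0:ℝ) 1, 𝔤 (τstar t) * (τstar' t) ^ 2 = c ^ 2 := by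
    intro t ht
    have := key t ht
    have h𝔤nn : 0 ≤ 𝔤 (τstar t) := le_of_lt (h𝔤_pos _ (hτstar_maps ht))
    calc 𝔤 (τstar t) * (τstar' t) ^ 2
        = (Real.sqrt (𝔤 (τstar t)) * τstar' t) ^ 2 := by
          rw [mul_pow, Real.sq_sqrt h𝔤nn]
      _ = c ^ 2 := by rw [this]
  refine ⟨part1, ?_⟩
  have : (∫ t in (0:ℝ)..1, 𝔤 (τstar t) * (τstar' t) ^ 2) = ∫ t in (0:ℝ)..1, c ^ 2 := by
    apply intervalIntegral.integral_congr
    intro t ht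
    rw [Set.uIcc_of_le (by norm_num : (0:ℝ) ≤ 1)] at ht
    exact part1 t ht
  rw [this]
  simp
end

section
/- Let τ : [0,1] → [0,1] be an admissible reparameterization with J(τ) = (∫₀¹ 𝔤(σ)^{1/2} dσ)². Then F(τ(t)) = t for every t ∈ [0,1]; in other words, the global minimizer of J among admissible reparameterizations is unique and equal to F⁻¹. -/
/-!
Put `h s = √𝔤(τ s) · τ'(s)`. The substitution `σ = τ s` gives `∫₀ᵘ h = ∫₀^{τ u} √𝔤`, so
`∫₀¹ h = L := ∫₀¹ √𝔤`, while `J(τ) = ∫₀¹ h²`. Thus `J(τ) = L²` is the equality case of the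
Cauchy–Schwarz inequality `(∫₀¹ h)² ≤ ∫₀¹ h²`, which forces `h = L` almost everywhere.
Integrating over `[0, t]` gives `∫₀^{τ t} √𝔤 = L t`, that is `F (τ t) = t`.
-/

open MeasureTheory Set

namespace intervalIntegral

theorem integral_comp_mul_deriv_of_hasDerivWithinAt_Icc {a b : ℝ} (hab : a ≤ b)
    {f f' g : ℝ → ℝ} (hf : ∀ x ∈ Icc a b, HasDerivWithinAt f (f' x) (Icc a b) x)
    (hf' : ContinuousOn f' (Icc a b)) (hg : ContinuousOn g (f '' Icc a b)) :
    ∫ x in a..b, g (f x) * f' x = ∫ u in f a..f b, g u := by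
  rw [← uIcc_of_le hab] at hf' hg
  refine integral_comp_mul_deriv''
    (fun x hx => (hf x (uIcc_of_le hab ▸ hx)).continuousWithinAt.mono (uIcc_of_le hab).subset)
    (fun x hx => ?_) hf' hg
  rw [min_eq_left hab, max_eq_right hab] at hx
  exact ((hf x (Ioo_subset_Icc_self hx)).hasDerivAt (Icc_mem_nhds hx.1 hx.2)).hasDerivWithinAt

section CauchySchwarzEquality

variable {h : ℝ → ℝ} {a b : ℝ}

theorem ae_eq_const_of_sq_integral_eq_mul_integral_sq (hab : a < b)
    (hi : IntervalIntegrable h volume a b)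
    (hi2 : IntervalIntegrable (fun x => h x ^ 2) volume a b)
    (heq : (∫ x in a..b, h x) ^ 2 = (b - a) * ∫ x in a..b, h x ^ 2) :
    h =ᵐ[volume.restrict (Ioc a b)] fun _ => (∫ x in a..b, h x) / (b - a) := by
  set c := (∫ x in a..b, h x) / (b - a)
  have hc : c * (b - a) = ∫ x in a..b, h x := div_mul_cancel₀ _ (sub_ne_zero.2 hab.ne')
  have hexp : (fun x => (h x - c) ^ 2) = fun x => h x ^ 2 - (2 * c) * h x + c ^ 2 :=
    funext fun x => by ring
  have hint : IntervalIntegrable (fun x => (h x - c) ^ 2) volume a b :=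
    hexp ▸ (hi2.sub (hi.const_mul _)).add intervalIntegrable_const
  -- `(b - a) ∫ (h - c)² = (b - a) ∫ h² - (∫ h)²`, the defect in Cauchy–Schwarz
  have hvar : ∫ x in a..b, (h x - c) ^ 2 = 0 := by
    rw [hexp, integral_add (hi2.sub (hi.const_mul _)) intervalIntegrable_const,
      integral_sub hi2 (hi.const_mul _), integral_const_mul, integral_const, smul_eq_mul]
    refine (mul_eq_zero.1 ?_).resolve_left (sub_ne_zero.2 hab.ne')
    linear_combination -heq + (c * (b - a) - ∫ x in a..b, h x) * hc
  rw [integral_eq_zero_iff_of_le_of_nonneg_ae hab.le (ae_of_all _ fun x => sq_nonneg _) hint]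
    at hvar
  filter_upwards [hvar] with x hx
  exact sub_eq_zero.1 (pow_eq_zero_iff two_ne_zero |>.1 hx)

theorem integral_eq_mul_of_sq_integral_eq_mul_integral_sq (hab : a < b)
    (hi : IntervalIntegrable h volume a b)
    (hi2 : IntervalIntegrable (fun x => h x ^ 2) volume a b)
    (heq : (∫ x in a..b, h x) ^ 2 = (b - a) * ∫ x in a..b, h x ^ 2) {t : ℝ} (ht : t ∈ Icc a b) :
    ∫ x in a..t, h x = (t - a) / (b - a) * ∫ x in a..b, h x := by
  have hconst := ae_restrict_of_ae_restrict_of_subset (Ioc_subset_Ioc_right ht.2)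
    (ae_eq_const_of_sq_integral_eq_mul_integral_sq hab hi hi2 heq)
  rw [integral_of_le ht.1, MeasureTheory.integral_congr_ae hconst, setIntegral_const,
    Real.volume_real_Ioc_of_le ht.1, smul_eq_mul]
  ring

end CauchySchwarzEquality

end intervalIntegral

theorem gora_minimizer_unique_general
    (𝔤 : ℝ → ℝ)
    (h𝔤_cont : ContinuousOn 𝔤 (Set.Icc 0 1))
    (h𝔤_pos : ∀ σ ∈ Set.Icc (0:ℝ) 1, 0 < 𝔤 σ)
    (F : ℝ → ℝ)
    (hF : ∀ s, F s =
      (∫ σ in (0:ℝ)..s, Real.sqrt (𝔤 σ)) / (∫ σ in (0:ℝ)..1, Real.sqrt (𝔤 σ)))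
    (τ τ' : ℝ → ℝ)
    (hτ_maps : Set.MapsTo τ (Set.Icc 0 1) (Set.Icc 0 1))
    (hτ_deriv : ∀ t ∈ Set.Icc (0:ℝ) 1, HasDerivWithinAt τ (τ' t) (Set.Icc 0 1) t)
    (hτ'_cont : ContinuousOn τ' (Set.Icc 0 1))
    (hτ0 : τ 0 = 0) (hτ1 : τ 1 = 1)
    (hJ : (∫ t in (0:ℝ)..1, 𝔤 (τ t) * (τ' t) ^ 2)
        = (∫ σ in (0:ℝ)..1, Real.sqrt (𝔤 σ)) ^ 2) :
    ∀ t ∈ Set.Icc (0:ℝ) 1, F (τ t) = t := by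
  intro t ht
  set L := ∫ σ in (0:ℝ)..1, √(𝔤 σ)
  set h := fun s => √(𝔤 (τ s)) * τ' s
  have hsqrt_cont : ContinuousOn (fun σ => √(𝔤 σ)) (Icc 0 1) := h𝔤_cont.sqrt
  have hL_pos : 0 < L := intervalIntegral.intervalIntegral_pos_of_pos_on
    (hsqrt_cont.intervalIntegrable_of_Icc zero_le_one)
    (fun σ hσ => Real.sqrt_pos.2 (h𝔤_pos σ (Ioo_subset_Icc_self hσ))) zero_lt_one
  have hh_cont : ContinuousOn h (Icc 0 1) :=
    (hsqrt_cont.comp (fun x hx => (hτ_deriv x hx).continuousWithinAt) hτ_maps).mul hτ'_cont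
  have hh_primitive : ∀ u ∈ Icc (0:ℝ) 1, ∫ s in (0:ℝ)..u, h s = ∫ σ in (0:ℝ)..τ u, √(𝔤 σ) := by
    intro u hu
    have hsub : Icc 0 u ⊆ Icc (0:ℝ) 1 := Icc_subset_Icc_right hu.2
    have hsubst := intervalIntegral.integral_comp_mul_deriv_of_hasDerivWithinAt_Icc hu.1
      (fun x hx => (hτ_deriv x (hsub hx)).mono hsub) (hτ'_cont.mono hsub)
      (hsqrt_cont.mono ((image_mono hsub).trans hτ_maps.image_subset))
    rwa [hτ0] at hsubst
  have hh_integral : ∫ s in (0:ℝ)..1, h s = L := by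
    rw [hh_primitive 1 (right_mem_Icc.2 zero_le_one), hτ1]
  have hh_sq_integral : ∫ s in (0:ℝ)..1, h s ^ 2 = L ^ 2 := by
    rw [← hJ]
    refine intervalIntegral.integral_congr fun s hs => ?_
    rw [uIcc_of_le zero_le_one] at hs
    simp only [h, mul_pow, Real.sq_sqrt (h𝔤_pos _ (hτ_maps hs)).le]
  have hh_linear := intervalIntegral.integral_eq_mul_of_sq_integral_eq_mul_integral_sq
    zero_lt_one (hh_cont.intervalIntegrable_of_Icc zero_le_one)
    ((hh_cont.pow 2).intervalIntegrable_of_Icc zero_le_one)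
    (by rw [hh_integral, hh_sq_integral]; ring) ht
  rw [hF, ← hh_primitive t ht, hh_linear, hh_integral, sub_zero, sub_zero, div_one,
    mul_div_cancel_right₀ t hL_pos.ne']

/-- **Uniqueness of the global minimizer.** If an admissible reparameterization `τ`
attains the lower bound `J(τ) = (∫₀¹ √(𝔤(σ)) dσ)²`, then `F (τ(t)) = t` for every
`t ∈ [0,1]`; i.e. the global minimizer of `J` is unique and equal to `F⁻¹`. -/
theorem gora_minimizer_unique
    (𝔤 : ℝ → ℝ)
    (h𝔤_cont : ContinuousOn 𝔤 (Set.Icc 0 1))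
    (h𝔤_pos : ∀ σ ∈ Set.Icc (0:ℝ) 1, 0 < 𝔤 σ)
    (F : ℝ → ℝ)
    (hF : ∀ s, F s =
      (∫ σ in (0:ℝ)..s, Real.sqrt (𝔤 σ)) / (∫ σ in (0:ℝ)..1, Real.sqrt (𝔤 σ)))
    (τ τ' : ℝ → ℝ)
    (hτ_maps : Set.MapsTo τ (Set.Icc 0 1) (Set.Icc 0 1))
    (hτ_deriv : ∀ t ∈ Set.Icc (0:ℝ) 1, HasDerivWithinAt τ (τ' t) (Set.Icc 0 1) t)
    (hτ'_cont : ContinuousOn τ' (Set.Icc 0 1))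
    (hτ'_nonneg : ∀ t ∈ Set.Icc (0:ℝ) 1, 0 ≤ τ' t)
    (hτ0 : τ 0 = 0) (hτ1 : τ 1 = 1)
    (hJ : (∫ t in (0:ℝ)..1, 𝔤 (τ t) * (τ' t) ^ 2)
        = (∫ σ in (0:ℝ)..1, Real.sqrt (𝔤 σ)) ^ 2) :
    ∀ t ∈ Set.Icc (0:ℝ) 1, F (τ t) = t :=
  gora_minimizer_unique_general 𝔤 h𝔤_cont h𝔤_pos F hF τ τ' hτ_maps hτ_deriv hτ'_cont hτ0 hτ1 hJ
end

section
/- Assume in addition that 𝔤 is continuously differentiable on [0,1] with derivative 𝔤'. Let τ* : [0,1] → [0,1] be continuously differentiable with F(τ*(t)) = t for all t ∈ [0,1]. Then τ* is twice differentiable on [0,1] and satisfies the Euler–Lagrange equation 2 𝔤(τ*(t)) τ*''(t) + 𝔤'(τ*(t)) τ*'(t)² = 0 for every t ∈ [0,1]. -/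
/-- **`F⁻¹` satisfies the Euler–Lagrange equation.** Assume `𝔤` is continuously
differentiable on `[0,1]` with derivative `𝔤'`. If `τ*` is continuously differentiable
with `F (τ*(t)) = t` on `[0,1]`, then `τ*` is twice differentiable on `[0,1]` and
satisfies `2 𝔤(τ*(t)) τ*''(t) + 𝔤'(τ*(t)) τ*'(t)² = 0` for every `t ∈ [0,1]`. -/
theorem gora_inverse_satisfies_euler_lagrange
    (𝔤 𝔤' : ℝ → ℝ)
    (h𝔤_pos : ∀ σ ∈ Set.Icc (0:ℝ) 1, 0 < 𝔤 σ)
    (h𝔤_deriv : ∀ σ ∈ Set.Icc (0:ℝ) 1, HasDerivWithinAt 𝔤 (𝔤' σ) (Set.Icc 0 1) σ)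
    (h𝔤'_cont : ContinuousOn 𝔤' (Set.Icc 0 1))
    (F : ℝ → ℝ)
    (hF : ∀ s, F s =
      (∫ σ in (0:ℝ)..s, Real.sqrt (𝔤 σ)) / (∫ σ in (0:ℝ)..1, Real.sqrt (𝔤 σ)))
    (τstar τstar' : ℝ → ℝ)
    (hτstar_maps : Set.MapsTo τstar (Set.Icc 0 1) (Set.Icc 0 1))
    (hτstar_deriv : ∀ t ∈ Set.Icc (0:ℝ) 1, HasDerivWithinAt τstar (τstar' t) (Set.Icc 0 1) t)
    (hτstar'_cont : ContinuousOn τstar' (Set.Icc 0 1))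
    (hτstar_inv : ∀ t ∈ Set.Icc (0:ℝ) 1, F (τstar t) = t) :
    ∃ τstar'' : ℝ → ℝ,
      (∀ t ∈ Set.Icc (0:ℝ) 1, HasDerivWithinAt τstar' (τstar'' t) (Set.Icc 0 1) t)
      ∧ ∀ t ∈ Set.Icc (0:ℝ) 1,
          2 * 𝔤 (τstar t) * τstar'' t + 𝔤' (τstar t) * (τstar' t) ^ 2 = 0 := by
  -- continuity of 𝔤 on Icc
  have h𝔤_cont : ContinuousOn 𝔤 (Set.Icc 0 1) := fun x hx =>
    (h𝔤_deriv x hx).continuousWithinAt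
  -- extend √𝔤 to a continuous function on ℝ
  set π : ℝ → ℝ := fun σ => (Set.projIcc (0:ℝ) 1 zero_le_one σ : ℝ) with hπ
  have hπ_cont : Continuous π := continuous_subtype_val.comp continuous_projIcc
  have hπ_mem : ∀ σ, π σ ∈ Set.Icc (0:ℝ) 1 := fun σ => (Set.projIcc 0 1 zero_le_one σ).2
  have hπ_eq : ∀ σ ∈ Set.Icc (0:ℝ) 1, π σ = σ := fun σ hσ => by
    simp [hπ, Set.projIcc_of_mem zero_le_one hσ]
  set he : ℝ → ℝ := fun σ => Real.sqrt (𝔤 (π σ)) with hhe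
  have he_cont : Continuous he :=
    Real.continuous_sqrt.comp (h𝔤_cont.comp_continuous hπ_cont hπ_mem)
  have he_pos : ∀ σ, 0 < he σ := fun σ => Real.sqrt_pos.2 (h𝔤_pos _ (hπ_mem σ))
  have he_eq : ∀ σ ∈ Set.Icc (0:ℝ) 1, he σ = Real.sqrt (𝔤 σ) := fun σ hσ => by
    simp [hhe, hπ_eq σ hσ]
  -- the integrals agree on [0,1]
  have hint_eq : ∀ s ∈ Set.Icc (0:ℝ) 1,
      (∫ σ in (0:ℝ)..s, Real.sqrt (𝔤 σ)) = ∫ σ in (0:ℝ)..s, he σ := by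
    intro s hs
    refine intervalIntegral.integral_congr fun x hx => ?_
    rw [Set.uIcc_of_le hs.1] at hx
    exact (he_eq x ⟨hx.1, le_trans hx.2 hs.2⟩).symm
  set c : ℝ := ∫ σ in (0:ℝ)..1, he σ with hc
  have hc_pos : 0 < c :=
    intervalIntegral.intervalIntegral_pos_of_pos (he_cont.intervalIntegrable 0 1)
      (fun x => he_pos x) zero_lt_one
  have hc_ne : c ≠ 0 := ne_of_gt hc_pos
  -- G := the smooth antiderivative over ℝ
  set G : ℝ → ℝ := fun u => (∫ σ in (0:ℝ)..u, he σ) / c with hG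
  have hG_deriv : ∀ u, HasDerivAt G (he u / c) u := by
    intro u
    exact (intervalIntegral.integral_hasDerivAt_right (he_cont.intervalIntegrable 0 u)
      he_cont.aestronglyMeasurable.stronglyMeasurableAtFilter he_cont.continuousAt).div_const c
  have hFG : ∀ s ∈ Set.Icc (0:ℝ) 1, F s = G s := by
    intro s hs
    rw [hF s, hint_eq s hs, hint_eq 1 (by norm_num)]
  -- F has derivative he s / c within Icc
  have hF_deriv : ∀ s ∈ Set.Icc (0:ℝ) 1,
      HasDerivWithinAt F (he s / c) (Set.Icc 0 1) s := fun s hs =>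
    ((hG_deriv s).hasDerivWithinAt).congr (fun y hy => hFG y hy) (hFG s hs)
  -- key identity: √𝔤(τ* t) / c * τ*' t = 1
  have hkey : ∀ t ∈ Set.Icc (0:ℝ) 1, he (τstar t) / c * τstar' t = 1 := by
    intro t ht
    have hcomp : HasDerivWithinAt (F ∘ τstar) (he (τstar t) / c * τstar' t)
        (Set.Icc 0 1) t :=
      (hF_deriv _ (hτstar_maps ht)).comp t (hτstar_deriv t ht) hτstar_maps
    have hid : HasDerivWithinAt (fun u : ℝ => u) (he (τstar t) / c * τstar' t)
        (Set.Icc 0 1) t :=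
      hcomp.congr (fun y hy => (hτstar_inv y hy).symm) (hτstar_inv t ht).symm
    have hu : UniqueDiffWithinAt ℝ (Set.Icc (0:ℝ) 1) t :=
      (uniqueDiffOn_Icc zero_lt_one) t ht
    have hid' : HasDerivWithinAt id (he (τstar t) / c * τstar' t) (Set.Icc 0 1) t := hid
    exact (hid'.derivWithin hu).symm.trans ((hasDerivWithinAt_id t _).derivWithin hu)
  have hsqrt_pos : ∀ t ∈ Set.Icc (0:ℝ) 1, 0 < Real.sqrt (𝔤 (τstar t)) := fun t ht =>
    Real.sqrt_pos.2 (h𝔤_pos _ (hτstar_maps ht))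
  have h𝔤τ_pos : ∀ t ∈ Set.Icc (0:ℝ) 1, 0 < 𝔤 (τstar t) := fun t ht =>
    h𝔤_pos _ (hτstar_maps ht)
  -- τ*' t = c / √𝔤(τ* t)
  have hτ' : ∀ t ∈ Set.Icc (0:ℝ) 1, τstar' t = c / Real.sqrt (𝔤 (τstar t)) := by
    intro t ht
    have h1 := hkey t ht
    rw [he_eq _ (hτstar_maps ht)] at h1
    have hne := ne_of_gt (hsqrt_pos t ht)
    field_simp at h1 ⊢
    linear_combination h1
  -- the second derivative
  refine ⟨fun t => -(𝔤' (τstar t) * (τstar' t) ^ 2) / (2 * 𝔤 (τstar t)), ?_, ?_⟩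
  · intro t ht
    -- derivative of 𝔤 ∘ τ*
    have h1 : HasDerivWithinAt (fun u => 𝔤 (τstar u)) (𝔤' (τstar t) * τstar' t)
        (Set.Icc 0 1) t :=
      (h𝔤_deriv _ (hτstar_maps ht)).comp t (hτstar_deriv t ht) hτstar_maps
    have h2 : HasDerivWithinAt (fun u => Real.sqrt (𝔤 (τstar u)))
        (1 / (2 * Real.sqrt (𝔤 (τstar t))) * (𝔤' (τstar t) * τstar' t))
        (Set.Icc 0 1) t :=
      (Real.hasDerivAt_sqrt (ne_of_gt (h𝔤τ_pos t ht))).comp_hasDerivWithinAt t h1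
    have hne : Real.sqrt (𝔤 (τstar t)) ≠ 0 := ne_of_gt (hsqrt_pos t ht)
    have h3 : HasDerivWithinAt (fun u => c / Real.sqrt (𝔤 (τstar u)))
        ((0 * Real.sqrt (𝔤 (τstar t)) -
          c * (1 / (2 * Real.sqrt (𝔤 (τstar t))) * (𝔤' (τstar t) * τstar' t))) /
          (Real.sqrt (𝔤 (τstar t))) ^ 2) (Set.Icc 0 1) t :=
      (hasDerivWithinAt_const t _ c).div h2 hne
    have h4 : HasDerivWithinAt τstar'
        ((0 * Real.sqrt (𝔤 (τstar t)) -
          c * (1 / (2 * Real.sqrt (𝔤 (τstar t))) * (𝔤' (τstar t) * τstar' t))) /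
          (Real.sqrt (𝔤 (τstar t))) ^ 2) (Set.Icc 0 1) t :=
      h3.congr (fun y hy => hτ' y hy) (hτ' t ht)
    convert h4 using 1
    have hsq : Real.sqrt (𝔤 (τstar t)) ^ 2 = 𝔤 (τstar t) :=
      Real.sq_sqrt (le_of_lt (h𝔤τ_pos t ht))
    have hcval : c = τstar' t * Real.sqrt (𝔤 (τstar t)) := by
      rw [hτ' t ht]; field_simp
    rw [hcval, hsq]
    have h𝔤ne : 𝔤 (τstar t) ≠ 0 := ne_of_gt (h𝔤τ_pos t ht)
    field_simp
    ring
  · intro t ht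
    have h𝔤ne : 𝔤 (τstar t) ≠ 0 := ne_of_gt (h𝔤τ_pos t ht)
    field_simp
    ring
end
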